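/- arXiv:0710.0376 — 4 statements merged into one kernel-verified Lean document; each statement's English description precedes it below -/
import Mathlib

section
/- (Stieltjes inversion / discontinuity of the resolvent.) Let ρ : ℝ → ℂ be continuous with compact support, and let G(z) = ∫_ℝ ρ(λ)/(z−λ) dλ for z off the real axis. Then for every η ∈ ℝ, lim_{ε→0⁺} (1/(2πi)) · [G(η − iε) − G(η + iε)] = ρ(η); equivalently, lim_{ε→0⁺} (1/(2πi)) ∫_ℝ ρ(λ)·(1/(η − iε − λ) − 1/(η + iε − λ)) dλ = ρ(η). -/
/-!
The jump `(2πi)⁻¹ (G(η - iε) - G(η + iε))` is the integral of `ρ` against the Cauchy (half-plane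
Poisson) kernel `ε / (π ((t - η)² + ε²))`. This kernel is nonnegative, its mass near `η` tends to `1`
(an `arctan` computation) and it tends to `0` uniformly away from `η`, so it is an approximate
identity and the integral tends to `ρ η`.
-/

open MeasureTheory Real Filter Topology ProbabilityTheory
open scoped NNReal

lemma NNReal.tendsto_coe_nhdsGT_zero : Tendsto ((↑) : ℝ≥0 → ℝ) (𝓝[>] 0) (𝓝[>] 0) := by
  rw [← NNReal.coe_zero, ← NNReal.map_coe_nhdsGT]
  exact tendsto_map

namespace ProbabilityTheory

variable (x₀ : ℝ) {γ : ℝ≥0}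

lemma cauchyPDFReal_nonneg (γ : ℝ≥0) (x : ℝ) : 0 ≤ cauchyPDFReal x₀ γ x := by
  rw [cauchyPDFReal_def]
  positivity

lemma continuous_cauchyPDFReal (hγ : γ ≠ 0) : Continuous (cauchyPDFReal x₀ γ) :=
  continuous_const.mul <| (by fun_prop : Continuous fun x : ℝ => (x - x₀) ^ 2 + (γ : ℝ) ^ 2).inv₀
    fun x => by positivity

lemma hasDerivAt_arctan_div_pi (hγ : γ ≠ 0) (x : ℝ) :
    HasDerivAt (fun x => arctan ((x - x₀) / γ) / π) (cauchyPDFReal x₀ γ x) x := by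
  have hγ' : (γ : ℝ) ≠ 0 := by exact_mod_cast hγ
  have := (((hasDerivAt_id x).sub_const x₀).div_const (γ : ℝ)).arctan.div_const π
  refine this.congr_deriv ?_
  rw [cauchyPDFReal_def, id]
  field_simp
  ring

lemma intervalIntegral_cauchyPDFReal (hγ : γ ≠ 0) (a b : ℝ) :
    ∫ x in a..b, cauchyPDFReal x₀ γ x = (arctan ((b - x₀) / γ) - arctan ((a - x₀) / γ)) / π := by
  rw [intervalIntegral.integral_eq_sub_of_hasDerivAt
    (fun x _ => hasDerivAt_arctan_div_pi x₀ hγ x)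
    ((continuous_cauchyPDFReal x₀ hγ).intervalIntegrable a b)]
  ring

lemma tendsto_setIntegral_Icc_cauchyPDFReal {a : ℝ} (ha : 0 < a) :
    Tendsto (fun γ : ℝ≥0 => ∫ x in Set.Icc (x₀ - a) (x₀ + a), cauchyPDFReal x₀ γ x)
      (𝓝[>] 0) (𝓝 1) := by
  have hlim : Tendsto (fun γ : ℝ≥0 => 2 / π * arctan (a / γ)) (𝓝[>] 0) (𝓝 (2 / π * (π / 2))) :=
    ((tendsto_nhds_of_tendsto_nhdsWithin tendsto_arctan_atTop).comp
      ((tendsto_inv_nhdsGT_zero.comp NNReal.tendsto_coe_nhdsGT_zero).const_mul_atTop ha)).const_mul _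
  rw [show 2 / π * (π / 2) = 1 by field_simp] at hlim
  refine hlim.congr' ?_
  filter_upwards [self_mem_nhdsWithin] with γ (hγ : 0 < γ)
  rw [integral_Icc_eq_integral_Ioc, ← intervalIntegral.integral_of_le (by linarith),
    intervalIntegral_cauchyPDFReal x₀ hγ.ne']
  rw [show x₀ + a - x₀ = a by ring, show x₀ - a - x₀ = -a by ring, neg_div, arctan_neg]
  ring

lemma cauchyPDFReal_le_of_le_abs (γ : ℝ≥0) {δ x : ℝ} (hδ : 0 < δ) (hx : δ ≤ |x - x₀|) :
    cauchyPDFReal x₀ γ x ≤ γ / (π * δ ^ 2) := by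
  have hδx : δ ^ 2 ≤ (x - x₀) ^ 2 := by simpa only [sq_abs] using pow_le_pow_left₀ hδ.le hx 2
  rw [cauchyPDFReal_def, div_eq_mul_inv, mul_inv, ← mul_assoc, mul_comm (γ : ℝ)]
  gcongr
  nlinarith [sq_nonneg (γ : ℝ)]

lemma tendstoUniformlyOn_cauchyPDFReal_compl {u : Set ℝ} (hu : IsOpen u) (hx₀ : x₀ ∈ u) :
    TendstoUniformlyOn (cauchyPDFReal x₀) 0 (𝓝[>] 0) uᶜ := by
  obtain ⟨δ, hδ, hball⟩ := Metric.isOpen_iff.1 hu x₀ hx₀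
  have hbound : Tendsto (fun γ : ℝ≥0 => (γ : ℝ) / (π * δ ^ 2)) (𝓝[>] 0) (𝓝 0) := by
    simpa using ((NNReal.continuous_coe.tendsto 0).div_const (π * δ ^ 2)).mono_left
      nhdsWithin_le_nhds
  rw [Metric.tendstoUniformlyOn_iff]
  intro r hr
  filter_upwards [(tendsto_order.1 hbound).2 r hr] with γ hγ x hx
  have hδx : δ ≤ |x - x₀| := by
    by_contra! h
    exact hx (hball (by rwa [Metric.mem_ball, Real.dist_eq]))
  rw [Pi.zero_apply, dist_zero_left, Real.norm_of_nonneg (cauchyPDFReal_nonneg x₀ γ x)]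
  exact (cauchyPDFReal_le_of_le_abs x₀ γ hδ hδx).trans_lt hγ

theorem tendsto_integral_cauchyPDFReal_smul {E : Type*} [NormedAddCommGroup E] [NormedSpace ℝ E]
    [CompleteSpace E] {f : ℝ → E} (hf : Integrable f) (hcf : ContinuousAt f x₀) :
    Tendsto (fun γ : ℝ≥0 => ∫ x, cauchyPDFReal x₀ γ x • f x) (𝓝[>] 0) (𝓝 (f x₀)) :=
  tendsto_integral_peak_smul_of_integrable_of_tendsto measurableSet_Icc
    (Icc_mem_nhds (by linarith) (by linarith)) measure_Icc_lt_top.ne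
    (Eventually.of_forall fun γ => cauchyPDFReal_nonneg x₀ γ)
    (fun _ hu hx₀ => tendstoUniformlyOn_cauchyPDFReal_compl x₀ hu hx₀)
    (tendsto_setIntegral_Icc_cauchyPDFReal x₀ one_pos)
    (Eventually.of_forall fun γ => (stronglyMeasurable_cauchyPDFReal x₀ γ).aestronglyMeasurable)
    hf hcf

lemma ofReal_cauchyPDFReal_eq_resolvent_jump (η t : ℝ) {γ : ℝ≥0} (hγ : γ ≠ 0) :
    (cauchyPDFReal η γ t : ℂ) = 1 / (2 * (π : ℂ) * Complex.I) *
      (1 / ((η : ℂ) - Complex.I * γ - t) - 1 / ((η : ℂ) + Complex.I * γ - t)) := by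
  have hγ' : (0 : ℝ) < γ := by positivity
  have hminus : (η : ℂ) - Complex.I * γ - t ≠ 0 := by
    intro h
    simpa [hγ'.ne'] using congrArg Complex.im h
  have hplus : (η : ℂ) + Complex.I * γ - t ≠ 0 := by
    intro h
    simpa [hγ'.ne'] using congrArg Complex.im h
  have hsum : ((t : ℂ) - η) ^ 2 + (γ : ℂ) ^ 2 ≠ 0 := by
    exact_mod_cast (by positivity : (0 : ℝ) < (t - η) ^ 2 + (γ : ℝ) ^ 2).ne'
  have hprod : ((η : ℂ) - Complex.I * γ - t) * ((η : ℂ) + Complex.I * γ - t)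
      = ((t : ℂ) - η) ^ 2 + (γ : ℂ) ^ 2 := by
    linear_combination (-(γ : ℂ) ^ 2) * Complex.I_sq
  rw [div_sub_div _ _ hminus hplus, hprod, cauchyPDFReal_def]
  push_cast
  field_simp
  ring

end ProbabilityTheory

/-- Stieltjes inversion: the discontinuity of the resolvent
`G(z) = ∫ ρ(λ)/(z-λ) dλ` across the real axis recovers the density `ρ`. -/
theorem stmt_3 (ρ : ℝ → ℂ) (hρ : Continuous ρ) (hsupp : HasCompactSupport ρ)
    (η : ℝ) :
    Tendsto (fun ε : ℝ =>
        (1 / (2 * (π : ℂ) * Complex.I)) *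
          ∫ t : ℝ, ρ t * (1 / ((η : ℂ) - Complex.I * ε - t)
            - 1 / ((η : ℂ) + Complex.I * ε - t)))
      (𝓝[>] 0) (𝓝 (ρ η)) := by
  -- Mathlib's Cauchy density takes its scale in `ℝ≥0`.
  rw [← NNReal.coe_zero, ← NNReal.map_coe_nhdsGT, tendsto_map'_iff]
  refine (tendsto_integral_cauchyPDFReal_smul η (hρ.integrable_of_hasCompactSupport hsupp)
    hρ.continuousAt).congr' ?_
  filter_upwards [self_mem_nhdsWithin] with γ (hγ : 0 < γ)
  rw [Function.comp_apply, ← integral_const_mul]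
  refine integral_congr_ae (Eventually.of_forall fun t => ?_)
  simp only [Complex.real_smul, ofReal_cauchyPDFReal_eq_resolvent_jump η t hγ.ne']
  ring
end

section
/- (∂_{z̄}(1/z) = π δ²(z) in the distributional sense.) Let φ : ℂ → ℂ be continuously differentiable (as a function of the two real variables x, y with z = x + iy) and compactly supported, and write ∂̄φ = (1/2)(∂φ/∂x + i·∂φ/∂y). Then ∫_ℂ (∂̄φ)(z) · (1/z) dA(z) = −π·φ(0). -/
/-! In polar coordinates `z = r e^{iθ}` the area element `r dr dθ` cancels the singularity
of `1 / z`, and `r (∂̄φ)(z) / z = ½ ∂_r φ(r e^{iθ}) + (i / 2r) ∂_θ φ(r e^{iθ})`.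
The angular term integrates to zero over every circle, since the circle is closed; the radial
term integrates to `-φ(0) / 2` over every ray, since `φ` has compact support. Integrating over
`θ ∈ (-π, π)` gives `-π φ(0)`. -/

open MeasureTheory Real Complex

theorem ContinuousLinearMap.apply_add_I_mul_apply_I_mul (A : ℂ →L[ℝ] ℂ) (w : ℂ) :
    A w + I * A (I * w) = (A 1 + I * A I) * (starRingEnd ℂ) w := by
  have hA (u : ℂ) : A u = u.re • A 1 + u.im • A I := by
    conv_lhs => rw [← re_add_im u, ← mul_one (u.re : ℂ), ← real_smul, ← real_smul]
    rw [map_add, map_smul, map_smul]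
  rw [hA w, hA (I * w)]
  apply Complex.ext <;> simp <;> ring

theorem ContinuousLinearMap.smul_dbar_mul_one_div_smul_exp (A : ℂ →L[ℝ] ℂ) {r : ℝ}
    (hr : r ≠ 0) (θ : ℝ) :
    r • ((1 / 2 : ℂ) * (A 1 + I * A I) * (1 / (r • exp (θ * I)))) =
      (1 / 2 : ℂ) * A (exp (θ * I)) + (I / 2) * A (I * exp (θ * I)) := by
  have hconj : (starRingEnd ℂ) (exp (θ * I)) = (exp (θ * I))⁻¹ := by
    rw [← exp_conj, ← Complex.exp_neg]
    simp
  have hr' : (r : ℂ) ≠ 0 := by exact_mod_cast hr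
  calc _ = (1 / 2 : ℂ) * ((A 1 + I * A I) * (exp (θ * I))⁻¹) := by
        rw [real_smul, real_smul]
        field_simp
    _ = _ := by
        rw [← hconj, ← A.apply_add_I_mul_apply_I_mul]
        ring

theorem integral_dbar_mul_one_div_eq_integral_polarCoord (φ : ℂ → ℂ) :
    ∫ z : ℂ, ((1 / 2 : ℂ) * (fderiv ℝ φ z 1 + I * fderiv ℝ φ z I)) * (1 / z) =
      ∫ p in polarCoord.target,
        (1 / 2 : ℂ) * fderiv ℝ φ (p.1 • exp (p.2 * I)) (exp (p.2 * I)) +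
          (I / 2) * fderiv ℝ φ (p.1 • exp (p.2 * I)) (I * exp (p.2 * I)) := by
  rw [← Complex.integral_comp_polarCoord_symm]
  refine setIntegral_congr_fun polarCoord.open_target.measurableSet fun p hp => ?_
  have hpolar : Complex.polarCoord.symm p = p.1 • exp (p.2 * I) := by
    rw [Complex.polarCoord_symm_apply, real_smul, exp_mul_I, ← ofReal_cos, ← ofReal_sin]
  rw [hpolar]
  exact (fderiv ℝ φ _).smul_dbar_mul_one_div_smul_exp hp.1.out.ne' p.2

theorem integrableOn_polarCoord_target {E : Type*} [NormedAddCommGroup E] {G : ℝ × ℝ → E}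
    (hG : Continuous G) {R : ℝ} (hR : ∀ p : ℝ × ℝ, R < p.1 → G p = 0) :
    IntegrableOn G polarCoord.target := by
  have hcompact : IsCompact (Set.Icc 0 R ×ˢ Set.Icc (-π) π) := isCompact_Icc.prod isCompact_Icc
  refine (hG.continuousOn.integrableOn_compact hcompact).of_forall_sdiff_eq_zero
    (measurableSet_Ioi.prod measurableSet_Ioo) fun p ⟨hp, hpR⟩ => hR p ?_
  by_contra! h
  exact hpR ⟨⟨hp.1.out.le, h⟩, Set.Ioo_subset_Icc_self hp.2⟩

theorem integrableOn_polarCoord_target_fderiv {E : Type*} [NormedAddCommGroup E]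
    [NormedSpace ℝ E] {φ : ℂ → E} (hφ : ContDiff ℝ 1 φ) (hsupp : HasCompactSupport φ)
    {v : ℝ → ℂ} (hv : Continuous v) :
    IntegrableOn (fun p : ℝ × ℝ => fderiv ℝ φ (p.1 • exp (p.2 * I)) (v p.2))
      polarCoord.target := by
  obtain ⟨R, hR⟩ := hsupp.isBounded.subset_closedBall 0
  have hDφ : Continuous (fderiv ℝ φ) := hφ.continuous_fderiv one_ne_zero
  refine integrableOn_polarCoord_target (R := R) (by fun_prop) fun p hp => ?_
  suffices p.1 • exp (p.2 * I) ∉ tsupport φ by rw [fderiv_of_notMem_tsupport ℝ this]; rfl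
  intro h
  have hnorm := hR h
  rw [Metric.mem_closedBall, dist_zero_right, norm_smul, norm_exp_ofReal_mul_I, mul_one,
    Real.norm_eq_abs] at hnorm
  linarith [le_abs_self p.1]

theorem integral_Ioi_fderiv_smul_eq_neg {F E : Type*} [NormedAddCommGroup F] [NormedSpace ℝ F]
    [FiniteDimensional ℝ F] [NormedAddCommGroup E] [NormedSpace ℝ E] [CompleteSpace E]
    {φ : F → E} (hφ : ContDiff ℝ 1 φ) (hsupp : HasCompactSupport φ) {v : F} (hv : v ≠ 0) :
    ∫ r in Set.Ioi (0 : ℝ), fderiv ℝ φ (r • v) v = -φ 0 := by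
  have hray : ContDiff ℝ 1 fun r : ℝ => r • v := by fun_prop
  have hderiv (r : ℝ) : deriv (φ ∘ fun r : ℝ => r • v) r = fderiv ℝ φ (r • v) v := by
    simpa using ((hφ.differentiable one_ne_zero _).hasFDerivAt.comp_hasDerivAt r
      ((hasDerivAt_id r).smul_const v)).deriv
  simpa [hderiv] using HasCompactSupport.integral_Ioi_deriv_eq (hφ.comp hray)
    (hsupp.comp_isClosedEmbedding (isClosedEmbedding_smul_left hv)) 0

theorem integral_Ioo_fderiv_smul_exp_eq_zero {E : Type*} [NormedAddCommGroup E]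
    [NormedSpace ℝ E] [CompleteSpace E] {φ : ℂ → E} (hφ : ContDiff ℝ 1 φ) {r : ℝ} (hr : r ≠ 0) :
    ∫ θ in Set.Ioo (-π) π, fderiv ℝ φ (r • exp (θ * I)) (I * exp (θ * I)) = 0 := by
  have hderiv (θ : ℝ) : HasDerivAt (φ ∘ circleMap 0 r)
      (fderiv ℝ φ (circleMap 0 r θ) (circleMap 0 r θ * I)) θ :=
    (hφ.differentiable one_ne_zero _).hasFDerivAt.comp_hasDerivAt θ
      (hasDerivAt_circleMap 0 r θ)
  have hcont : Continuous fun θ => fderiv ℝ φ (circleMap 0 r θ) (circleMap 0 r θ * I) :=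
    ((hφ.continuous_fderiv one_ne_zero).comp (continuous_circleMap 0 r)).clm_apply (by fun_prop)
  have hloop : ∫ θ in (-π)..π, fderiv ℝ φ (circleMap 0 r θ) (circleMap 0 r θ * I) = 0 := by
    rw [intervalIntegral.integral_eq_sub_of_hasDerivAt (fun θ _ => hderiv θ)
      (hcont.intervalIntegrable _ _), Function.comp_apply, Function.comp_apply,
      ← periodic_circleMap 0 r (-π), show -π + 2 * π = π by ring, sub_self]
  have hsmul (θ : ℝ) : fderiv ℝ φ (circleMap 0 r θ) (circleMap 0 r θ * I) =
      r • fderiv ℝ φ (r • exp (θ * I)) (I * exp (θ * I)) := by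
    rw [← map_smul, circleMap_zero, real_smul, real_smul, mul_left_comm, mul_comm I]
  simp_rw [intervalIntegral.integral_of_le (neg_le_self pi_pos.le),
    integral_Ioc_eq_integral_Ioo, hsmul, integral_smul, smul_eq_zero] at hloop
  exact hloop.resolve_left hr

/-- `∂̄(1/z) = π δ²(z)` in the distributional sense: for `φ` a compactly
supported `C¹` function on `ℂ`, with `∂̄φ = (1/2)(∂_x φ + i ∂_y φ)`,
one has `∫_ℂ (∂̄φ)(z) · (1/z) dA(z) = -π φ(0)`. -/
theorem stmt_6 (φ : ℂ → ℂ) (hφ : ContDiff ℝ 1 φ) (hsupp : HasCompactSupport φ) :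
    ∫ z : ℂ,
        ((1 / 2 : ℂ) * (fderiv ℝ φ z 1 + Complex.I * fderiv ℝ φ z Complex.I)) *
          (1 / z)
      = -(π : ℂ) * φ 0 := by
  have hrad := integrableOn_polarCoord_target_fderiv hφ hsupp (v := fun θ => exp (θ * I))
    (by fun_prop)
  have hang := integrableOn_polarCoord_target_fderiv hφ hsupp (v := fun θ => I * exp (θ * I))
    (by fun_prop)
  calc _ = (1 / 2 : ℂ) * (∫ θ in Set.Ioo (-π) π, ∫ r in Set.Ioi (0 : ℝ),
            fderiv ℝ φ (r • exp (θ * I)) (exp (θ * I))) +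
          (I / 2) * ∫ r in Set.Ioi (0 : ℝ), ∫ θ in Set.Ioo (-π) π,
            fderiv ℝ φ (r • exp (θ * I)) (I * exp (θ * I)) := by
        rw [integral_dbar_mul_one_div_eq_integral_polarCoord,
          integral_add (hrad.const_mul _) (hang.const_mul _), integral_const_mul,
          integral_const_mul, polarCoord_target, Measure.volume_eq_prod, setIntegral_prod _ hang,
          ← setIntegral_prod_swap]
        congr 2
        exact setIntegral_prod _ hrad.swap
    _ = (1 / 2 : ℂ) * ∫ _ in Set.Ioo (-π) π, -φ 0 := by
        rw [setIntegral_congr_fun measurableSet_Ioi fun r hr =>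
            integral_Ioo_fderiv_smul_exp_eq_zero hφ (ne_of_gt hr),
          setIntegral_congr_fun measurableSet_Ioo fun (θ : ℝ) _ =>
            integral_Ioi_fderiv_smul_eq_neg hφ hsupp (exp_ne_zero (θ * I)),
          integral_zero, mul_zero, add_zero]
    _ = -(π : ℂ) * φ 0 := by
        simp [pi_nonneg]
        ring
end

section
/- (Bosonic Gaussian integral producing an inverse determinant.) Let M be an n×n complex matrix whose Hermitian part M + Mᴴ is positive definite. Then the Gaussian integral over ℂ^n converges and ∫_{ℂ^n} exp(−⟨x, M x⟩) dx = π^n / det(M), where ⟨x, Mx⟩ = ∑_{i,j} conj(x_i) M_{ij} x_j and dx is Lebesgue measure on ℂ^n. In particular det(M) ≠ 0 under this hypothesis. -/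
/-!
Complete the square in the first coordinate. Writing `x = (z, y)` with `z ∈ ℂ`, the form
`⟨x, M x⟩` is a one-variable complex Gaussian in `z` plus `⟨y, S y⟩`, where `S` is the Schur
complement of `M₀₀`. Integrating out `z` (Fubini) contributes `π / M₀₀`, `S` inherits
`Re ⟨y, S y⟩ > 0` (take `z = -(M₀₀)⁻¹ ∑ⱼ M₀ⱼ yⱼ`), and `det M = M₀₀ · det S`, so induction
on `n` gives `πⁿ / det M`. Integrability comes from `Re ⟨x, M x⟩ ≥ c ‖x‖²`, by compactness of
the sphere.
-/

open MeasureTheory Real Matrix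
open Complex (I)
open scoped ComplexOrder

theorem exists_pos_mul_sq_norm_le {E : Type*} [NormedAddCommGroup E] [NormedSpace ℝ E]
    [ProperSpace E] {f : E → ℝ} (hf : Continuous f)
    (hhom : ∀ (t : ℝ) x, f (t • x) = t ^ 2 * f x) (hpos : ∀ x, x ≠ 0 → 0 < f x) :
    ∃ c > 0, ∀ x, c * ‖x‖ ^ 2 ≤ f x := by
  rcases subsingleton_or_nontrivial E with hE | hE
  · refine ⟨1, one_pos, fun x => ?_⟩
    simpa [Subsingleton.elim x 0] using (hhom 0 0).ge
  obtain ⟨u, hu, hmin⟩ := (isCompact_sphere (0 : E) 1).exists_isMinOn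
    (NormedSpace.sphere_nonempty.mpr zero_le_one) hf.continuousOn
  have hu0 : u ≠ 0 := ne_zero_of_mem_unit_sphere ⟨u, hu⟩
  refine ⟨f u, hpos u hu0, fun x => ?_⟩
  rcases eq_or_ne x 0 with rfl | hx
  · simpa using (hhom 0 0).ge
  have hxn : ‖x‖ ≠ 0 := norm_ne_zero_iff.mpr hx
  have hsphere : ‖x‖⁻¹ • x ∈ Metric.sphere (0 : E) 1 := by
    simp [norm_smul, hxn]
  calc f u * ‖x‖ ^ 2 ≤ f (‖x‖⁻¹ • x) * ‖x‖ ^ 2 := by gcongr; exact hmin hsphere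
    _ = f x := by rw [hhom, ← mul_rotate, ← mul_pow, mul_inv_cancel₀ hxn, one_pow, one_mul]

theorem integrable_exp_neg_mul_sq_norm {E : Type*} [NormedAddCommGroup E] [NormedSpace ℝ E]
    [FiniteDimensional ℝ E] [MeasurableSpace E] [BorelSpace E] (μ : Measure E)
    [μ.IsAddHaarMeasure] {c : ℝ} (hc : 0 < c) :
    Integrable (fun x : E => rexp (-c * ‖x‖ ^ 2)) μ := by
  rcases subsingleton_or_nontrivial E with hE | hE
  · exact Integrable.of_finite
  refine (integrable_fun_norm_addHaar μ (f := fun y => rexp (-c * y ^ 2))).mpr ?_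
  have := integrableOn_rpow_mul_exp_neg_mul_sq hc (s := (Module.finrank ℝ E - 1 : ℕ))
    (by linarith [(Module.finrank ℝ E - 1 : ℕ).cast_nonneg (α := ℝ)])
  refine this.congr_fun (fun y _ => ?_) measurableSet_Ioi
  simp [Real.rpow_natCast]

theorem integral_fin_succ_cons {E F : Type*} [MeasureSpace E] [SigmaFinite (volume : Measure E)]
    [NormedAddCommGroup F] [NormedSpace ℝ F] {n : ℕ} {f : (Fin (n + 1) → E) → F}
    (hf : Integrable f) : ∫ x, f x = ∫ y : Fin n → E, ∫ z : E, f (Fin.cons z y) := by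
  have hmp :=
    (measurePreserving_piFinSuccAbove (fun _ : Fin (n + 1) => (volume : Measure E)) 0).symm
  have hcons : ⇑(MeasurableEquiv.piFinSuccAbove (fun _ : Fin (n + 1) => E) 0).symm =
      fun p => Fin.cons p.1 p.2 := by
    ext p : 1
    simp [MeasurableEquiv.piFinSuccAbove_symm_apply, Fin.insertNthEquiv, Fin.insertNth_zero']
  rw [volume_pi, ← hmp.integral_comp', hcons, integral_prod_symm]
  · rfl
  · rw [← hcons]; exact hmp.integrable_comp_emb (MeasurableEquiv.measurableEmbedding _) |>.mpr hf

theorem integral_cexp_neg_mul_mul_conj_add {a : ℂ} (ha : 0 < a.re) (B C : ℂ) :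
    ∫ z : ℂ, Complex.exp (-(starRingEnd ℂ z * a * z + starRingEnd ℂ z * B + C * z))
      = π / a * Complex.exp (B * C / a) := by
  have hna : (-a).re < 0 := by simpa using ha
  have ha0 : a ≠ 0 := by rintro rfl; simp at ha
  have hsplit : ∀ s t : ℝ,
      Complex.exp (-(starRingEnd ℂ (s + t * I) * a * (s + t * I)
        + starRingEnd ℂ (s + t * I) * B + C * (s + t * I))) =
      Complex.exp (-a * (s : ℂ) ^ 2 + -(B + C) * s + 0) *
        Complex.exp (-a * (t : ℂ) ^ 2 + -((C - B) * I) * t + 0) := fun s t => by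
    rw [← Complex.exp_add]
    congr 1
    simp only [map_add, map_mul, Complex.conj_ofReal, Complex.conj_I]
    linear_combination a * t ^ 2 * Complex.I_sq
  rw [← Complex.volume_preserving_equiv_real_prod.symm.integral_comp
    (MeasurableEquiv.measurableEmbedding _)]
  simp only [Complex.measurableEquivRealProd_symm_apply, Complex.mk_eq_add_mul_I, hsplit]
  rw [Measure.volume_eq_prod,
    integral_prod_mul (fun s : ℝ => Complex.exp (-a * (s : ℂ) ^ 2 + -(B + C) * s + 0))
      (fun t : ℝ => Complex.exp (-a * (t : ℂ) ^ 2 + -((C - B) * I) * t + 0)),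
    integral_cexp_quadratic hna, integral_cexp_quadratic hna, mul_mul_mul_comm, ← sq, one_div,
    Complex.cpow_ofNat_inv_pow, neg_neg, ← Complex.exp_add]
  congr 2
  field_simp
  linear_combination (C - B) ^ 2 * Complex.I_sq

namespace Matrix

variable {n : ℕ}

section Schur

variable {K : Type*} [Field K]

def schurComplementZero (M : Matrix (Fin (n + 1)) (Fin (n + 1)) K) : Matrix (Fin n) (Fin n) K :=
  of fun i j => M i.succ j.succ - M i.succ 0 * M 0 j.succ / M 0 0

theorem det_eq_mul_det_schurComplementZero (M : Matrix (Fin (n + 1)) (Fin (n + 1)) K)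
    (h : M 0 0 ≠ 0) : M.det = M 0 0 * M.schurComplementZero.det := by
  let B : Matrix (Fin (n + 1)) (Fin (n + 1)) K :=
    Fin.cons (M 0) fun i => M i.succ - (M i.succ 0 / M 0 0) • M 0
  have hMB : M.det = B.det := by
    refine det_eq_of_forall_row_eq_smul_add_const (Fin.cons 0 fun i => M i.succ 0 / M 0 0) 0 rfl
      fun i j => ?_
    cases i using Fin.cases <;> simp [B]
  have hB : B.det = M 0 0 * M.schurComplementZero.det := by
    rw [det_succ_column_zero, Fin.sum_univ_succ]
    have hcol : ∀ i : Fin n, B i.succ 0 = 0 := fun i => by simp [B, h]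
    simp only [hcol, mul_zero, zero_mul, Finset.sum_const_zero, add_zero]
    congr 1
    · simp [B]
    · congr 1
      ext i j
      simp [B, schurComplementZero, submatrix, div_eq_inv_mul, mul_assoc]
  rw [hMB, hB]

end Schur

section StarQuadForm

variable {ι : Type*} [Fintype ι]

noncomputable def starQuadForm (M : Matrix ι ι ℂ) (x : ι → ℂ) : ℂ :=
  ∑ i, ∑ j, starRingEnd ℂ (x i) * M i j * x j

def IsStrictlyAccretive (M : Matrix ι ι ℂ) : Prop :=
  ∀ x, x ≠ 0 → 0 < (M.starQuadForm x).re

theorem starQuadForm_eq_dotProduct (M : Matrix ι ι ℂ) (x : ι → ℂ) :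
    M.starQuadForm x = star x ⬝ᵥ (M *ᵥ x) := by
  simp [starQuadForm, dotProduct, mulVec, Finset.mul_sum, mul_assoc]

theorem starQuadForm_single [DecidableEq ι] (M : Matrix ι ι ℂ) (i : ι) :
    M.starQuadForm (Pi.single i 1) = M i i := by
  simp [starQuadForm_eq_dotProduct]

theorem starQuadForm_real_smul (M : Matrix ι ι ℂ) (t : ℝ) (x : ι → ℂ) :
    M.starQuadForm (t • x) = (t : ℂ) ^ 2 * M.starQuadForm x := by
  simp only [starQuadForm_eq_dotProduct, mulVec_smul, star_smul, dotProduct_smul,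
    smul_dotProduct, star_trivial, Complex.real_smul, sq, mul_assoc]

theorem continuous_starQuadForm (M : Matrix ι ι ℂ) : Continuous M.starQuadForm := by
  unfold starQuadForm
  fun_prop

theorem isStrictlyAccretive_of_posDef_add_conjTranspose {M : Matrix ι ι ℂ}
    (hM : (M + Mᴴ).PosDef) : M.IsStrictlyAccretive := by
  intro x hx
  have h := hM.dotProduct_mulVec_pos hx
  rw [add_mulVec, dotProduct_add, dotProduct_mulVec (star x) Mᴴ, ← star_mulVec,
    star_dotProduct (M *ᵥ x), ← starQuadForm_eq_dotProduct, Complex.star_def, Complex.add_conj] at h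
  exact pos_of_mul_pos_right (Complex.zero_lt_real.mp h) zero_le_two

theorem IsStrictlyAccretive.det_ne_zero [DecidableEq ι] {M : Matrix ι ι ℂ}
    (hM : M.IsStrictlyAccretive) : M.det ≠ 0 := by
  intro h
  obtain ⟨v, hv, hMv⟩ := exists_mulVec_eq_zero_iff.mpr h
  simpa [starQuadForm_eq_dotProduct, hMv] using hM v hv

theorem IsStrictlyAccretive.re_diag_pos [DecidableEq ι] {M : Matrix ι ι ℂ}
    (hM : M.IsStrictlyAccretive) (i : ι) : 0 < (M i i).re := by
  simpa [starQuadForm_single] using hM (Pi.single i 1) (by simp)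

theorem IsStrictlyAccretive.integrable_cexp_neg_starQuadForm {M : Matrix ι ι ℂ}
    (hM : M.IsStrictlyAccretive) : Integrable fun x => Complex.exp (-M.starQuadForm x) := by
  obtain ⟨c, hc, hle⟩ := exists_pos_mul_sq_norm_le (f := fun x => (M.starQuadForm x).re)
    (Complex.continuous_re.comp M.continuous_starQuadForm)
    (fun t x => by rw [starQuadForm_real_smul, ← Complex.ofReal_pow, Complex.re_ofReal_mul]) hM
  refine (integrable_exp_neg_mul_sq_norm volume hc).mono'
    (Complex.continuous_exp.comp M.continuous_starQuadForm.neg).aestronglyMeasurable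
    (ae_of_all _ fun x => ?_)
  rw [Complex.norm_exp, Complex.neg_re, Real.exp_le_exp, neg_mul, neg_le_neg_iff]
  exact hle x

end StarQuadForm

theorem starQuadForm_cons (M : Matrix (Fin (n + 1)) (Fin (n + 1)) ℂ) (z : ℂ) (y : Fin n → ℂ) :
    M.starQuadForm (Fin.cons z y) =
      starRingEnd ℂ z * M 0 0 * z + starRingEnd ℂ z * (∑ j, M 0 j.succ * y j)
        + (∑ i, starRingEnd ℂ (y i) * M i.succ 0) * z
        + (M.submatrix Fin.succ Fin.succ).starQuadForm y := by
  simp only [starQuadForm, Fin.sum_univ_succ, Fin.cons_zero, Fin.cons_succ, submatrix_apply,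
    Finset.sum_add_distrib, Finset.mul_sum, Finset.sum_mul, mul_assoc]
  ring

theorem starQuadForm_schurComplementZero (M : Matrix (Fin (n + 1)) (Fin (n + 1)) ℂ)
    (y : Fin n → ℂ) :
    M.schurComplementZero.starQuadForm y = (M.submatrix Fin.succ Fin.succ).starQuadForm y
      - (∑ j, M 0 j.succ * y j) * (∑ i, starRingEnd ℂ (y i) * M i.succ 0) / M 0 0 := by
  simp only [starQuadForm, schurComplementZero, submatrix_apply, of_apply, mul_sub, sub_mul,
    Finset.sum_sub_distrib, Finset.sum_mul_sum, Finset.sum_div]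
  congr 1
  rw [Finset.sum_comm]
  exact Finset.sum_congr rfl fun _ _ => Finset.sum_congr rfl fun _ _ => by ring

theorem IsStrictlyAccretive.schurComplementZero {M : Matrix (Fin (n + 1)) (Fin (n + 1)) ℂ}
    (hM : M.IsStrictlyAccretive) : M.schurComplementZero.IsStrictlyAccretive := by
  intro y hy
  have ha : M 0 0 ≠ 0 := fun h => by simpa [h] using hM.re_diag_pos 0
  set B := ∑ j, M 0 j.succ * y j
  set z := -B / M 0 0 with hz
  have hBz : M 0 0 * z = -B := mul_div_cancel₀ _ ha
  have hq : M.starQuadForm (Fin.cons z y) = M.schurComplementZero.starQuadForm y := by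
    rw [starQuadForm_cons, starQuadForm_schurComplementZero]
    linear_combination starRingEnd ℂ z * hBz + (∑ i, starRingEnd ℂ (y i) * M i.succ 0) * hz
  rw [← hq]
  exact hM _ (Matrix.cons_nonzero_iff.mpr (Or.inr hy))

theorem integral_cexp_neg_starQuadForm_cons {M : Matrix (Fin (n + 1)) (Fin (n + 1)) ℂ}
    (ha : 0 < (M 0 0).re) (y : Fin n → ℂ) :
    ∫ z, Complex.exp (-M.starQuadForm (Fin.cons z y)) =
      π / M 0 0 * Complex.exp (-M.schurComplementZero.starQuadForm y) := by
  simp_rw [starQuadForm_cons, neg_add _ ((M.submatrix Fin.succ Fin.succ).starQuadForm y),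
    Complex.exp_add]
  rw [integral_mul_const, integral_cexp_neg_mul_mul_conj_add ha,
    starQuadForm_schurComplementZero, mul_assoc, ← Complex.exp_add]
  congr 2
  ring

theorem IsStrictlyAccretive.integral_cexp_neg_starQuadForm
    {M : Matrix (Fin n) (Fin n) ℂ} (hM : M.IsStrictlyAccretive) :
    ∫ x, Complex.exp (-M.starQuadForm x) = π ^ n / M.det := by
  induction n with
  | zero => simp [starQuadForm, measureReal_def, volume_pi]
  | succ n ih =>
    have ha := hM.re_diag_pos 0
    rw [integral_fin_succ_cons hM.integrable_cexp_neg_starQuadForm]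
    simp_rw [integral_cexp_neg_starQuadForm_cons ha]
    rw [integral_const_mul, ih hM.schurComplementZero,
      det_eq_mul_det_schurComplementZero M (fun h => by simp [h] at ha), pow_succ',
      mul_div_mul_comm]

end Matrix

/-- Bosonic Gaussian integral producing an inverse determinant: if the
Hermitian part `M + Mᴴ` is positive definite, then
`∫_{ℂⁿ} exp(-⟨x, Mx⟩) dx = πⁿ / det M`, and in particular `det M ≠ 0`. -/
theorem stmt_12 (n : ℕ) (M : Matrix (Fin n) (Fin n) ℂ)
    (hM : (M + Mᴴ).PosDef) :
    Integrable (fun x : Fin n → ℂ =>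
        Complex.exp (-∑ i, ∑ j, starRingEnd ℂ (x i) * M i j * x j)) ∧
    (∫ x : Fin n → ℂ,
        Complex.exp (-∑ i, ∑ j, starRingEnd ℂ (x i) * M i j * x j))
      = (π : ℂ) ^ n / M.det ∧
    M.det ≠ 0 := by
  have hM' := isStrictlyAccretive_of_posDef_add_conjTranspose hM
  exact ⟨hM'.integrable_cexp_neg_starQuadForm, hM'.integral_cexp_neg_starQuadForm,
    hM'.det_ne_zero⟩
end

section
/- (Gaussian integration over complex rectangular matrices by completing the square.) Let σ > 0 be real, and let B be an m×n complex matrix and C an n×m complex matrix. Then ∫ exp(−σ·Tr(AᴴA) − i·Tr(AᴴB) − i·Tr(C·A)) dA = (π/σ)^{mn} · exp(−(1/σ)·Tr(C·B)), where the integral is over all m×n complex matrices A with Lebesgue measure on the entries. -/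
/-!
Writing `Tr(AᴴA)`, `Tr(AᴴB)` and `Tr(CA)` as sums over the entries, the integrand factors
into a product of one-variable integrands, one for each entry `A i j`, and the integral is the
product of their integrals. For a single complex variable `z = x + y i` the exponent
`-σ |z|² - i z̄ b - i c z` is a sum of a quadratic in `x` and a quadratic in `y`; completing the
square in each real Gaussian integral gives `π/σ · exp(-c b/σ)`.
-/

open MeasureTheory Real Matrix

open Complex ComplexConjugate

theorem Matrix.trace_mul_eq_sum_sum {ι κ R : Type*} [Fintype ι] [Fintype κ]
    [NonUnitalNonAssocSemiring R] (X : Matrix κ ι R) (Y : Matrix ι κ R) :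
    (X * Y).trace = ∑ i, ∑ j, X j i * Y i j := by
  simp only [trace, diag, mul_apply]
  exact Finset.sum_comm

theorem integral_fintype_prod_prod_volume_eq_prod_prod {ι κ E 𝕜 : Type*} [Fintype ι]
    [Fintype κ] [RCLike 𝕜] [MeasureSpace E] [SigmaFinite (volume : Measure E)]
    (f : ι → κ → E → 𝕜) :
    ∫ A : ι → κ → E, ∏ i, ∏ j, f i j (A i j) = ∏ i, ∏ j, ∫ z, f i j z := by
  rw [integral_fintype_prod_volume_eq_prod fun i (r : κ → E) => ∏ j, f i j (r j)]
  simp_rw [integral_fintype_prod_volume_eq_prod]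

theorem cexp_trace_conjTranspose_mul_eq_prod {ι κ : Type*} [Fintype ι] [Fintype κ] (σ : ℂ)
    (A B : Matrix ι κ ℂ) (C : Matrix κ ι ℂ) :
    cexp (-σ * (Aᴴ * A).trace - I * (Aᴴ * B).trace - I * (C * A).trace)
      = ∏ i, ∏ j, cexp (-σ * (conj (A i j) * A i j) - I * (conj (A i j) * B i j)
          - I * (C j i * A i j)) := by
  simp only [trace_mul_eq_sum_sum, conjTranspose_apply, Finset.mul_sum, ← Finset.sum_sub_distrib,
    Complex.exp_sum]
  rfl

theorem integral_cexp_neg_mul_conj_mul_self_sub (σ : ℂ) (hσ : 0 < σ.re) (b c : ℂ) :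
    ∫ z : ℂ, cexp (-σ * (conj z * z) - I * (conj z * b) - I * (c * z))
      = π / σ * cexp (-(1 / σ) * (c * b)) := by
  have hσ0 : σ ≠ 0 := fun h => by simp [h] at hσ
  have hre : (-σ).re < 0 := by simpa using hσ
  have hsplit : ∀ p : ℝ × ℝ,
      cexp (-σ * (conj (measurableEquivRealProd.symm p) * measurableEquivRealProd.symm p)
          - I * (conj (measurableEquivRealProd.symm p) * b)
          - I * (c * measurableEquivRealProd.symm p))
        = cexp (-σ * (p.1 : ℂ) ^ 2 + -(I * (b + c)) * p.1 + 0)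
          * cexp (-σ * (p.2 : ℂ) ^ 2 + (c - b) * p.2 + 0) := by
    rintro ⟨x, y⟩
    have hz : measurableEquivRealProd.symm (x, y) = x + y * I := Complex.ext (by simp) (by simp)
    rw [← Complex.exp_add, hz]
    congr 1
    simp only [map_add, map_mul, conj_ofReal, conj_I]
    linear_combination (σ * y ^ 2 + b * y - c * y) * I_sq
  rw [← volume_preserving_equiv_real_prod.symm.integral_comp']
  simp_rw [hsplit]
  rw [Measure.volume_eq_prod,
    integral_prod_mul (fun x : ℝ => cexp (-σ * x ^ 2 + -(I * (b + c)) * x + 0))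
      (fun y : ℝ => cexp (-σ * y ^ 2 + (c - b) * y + 0)),
    integral_cexp_quadratic hre, integral_cexp_quadratic hre, neg_neg,
    mul_mul_mul_comm, ← Complex.exp_add]
  congr 1
  · rw [← sq, one_div, ← Nat.cast_ofNat, cpow_nat_inv_pow _ two_ne_zero]
  · congr 1
    field_simp
    linear_combination (b + c) ^ 2 * I_sq

/-- Gaussian integration over complex rectangular `m × n` matrices by
completing the square:
`∫ exp(-σ Tr(AᴴA) - i Tr(AᴴB) - i Tr(C A)) dA = (π/σ)^{mn} exp(-(1/σ) Tr(C B))`. -/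
theorem stmt_13 (m n : ℕ) (σ : ℝ) (hσ : 0 < σ)
    (B : Matrix (Fin m) (Fin n) ℂ) (C : Matrix (Fin n) (Fin m) ℂ) :
    (∫ A : Fin m → Fin n → ℂ,
        Complex.exp (-(σ : ℂ) * ((Matrix.of A)ᴴ * Matrix.of A).trace
          - Complex.I * ((Matrix.of A)ᴴ * B).trace
          - Complex.I * (C * Matrix.of A).trace))
      = ((π / σ : ℝ) : ℂ) ^ (m * n) *
          Complex.exp (-(1 / (σ : ℂ)) * (C * B).trace) := by
  simp_rw [cexp_trace_conjTranspose_mul_eq_prod, of_apply]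
  rw [integral_fintype_prod_prod_volume_eq_prod_prod fun i j z =>
    cexp (-σ * (conj z * z) - I * (conj z * B i j) - I * (C j i * z))]
  simp_rw [integral_cexp_neg_mul_conj_mul_self_sub (σ : ℂ) (by simpa using hσ),
    Finset.prod_mul_distrib, Finset.prod_const, ← Complex.exp_sum, Finset.card_univ,
    Fintype.card_fin, ← pow_mul, trace_mul_eq_sum_sum C B, ← Finset.mul_sum]
  rw [Finset.sum_comm]
  push_cast
  ring_nf
end
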